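/- arXiv:1810.11720 — 3 statements merged into one kernel-verified Lean document; each statement's English description precedes it below -/
import Mathlib

section
/- For every real number z > 0 that is not an integer, with n = ⌊z⌋ (the integer part of z), one has 1/Γ(z) = (sin(πz)/π) · ∫₀^∞ (e^{−x} − e_{n−1}(−x)) · x^{−z} dx, where the integral is a convergent improper Riemann (Lebesgue) integral over (0, ∞). -/
/-!
The remainder `R_n(x) = e^{-x} - e_{n-1}(-x)` satisfies `R_{n+1}' = -R_n`, `R_{n+1}(0) = 0` and
hence `|R_n(x)| ≤ x^n / n!` for `x ≥ 0`. For `n < s < n + 1` this makes `∫₀^∞ R_n(x) x^{-s} dx`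
converge, and an integration by parts lowers `n` and `s` by one at the cost of a factor
`1 / (1 - s)`; by induction from Euler's integral at `n = 0` the integral is `Γ(1 - s)`.
The reflection formula `Γ(z) Γ(1 - z) = π / sin(πz)` then gives the claim.
-/

open MeasureTheory Real Filter Set

/-- Truncated exponential polynomial `e_n(x) = ∑_{k=0}^{n} x^k / k!`.
Note that `e_{n-1}(x)` corresponds to `∑ k in Finset.range n, x^k / k!`. -/
noncomputable def truncExpPrev (n : ℕ) (x : ℝ) : ℝ :=
  ∑ k ∈ Finset.range n, x ^ k / (k.factorial : ℝ)

open scoped Topology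

theorem hasDerivAt_truncExpPrev_succ (n : ℕ) (x : ℝ) :
    HasDerivAt (truncExpPrev (n + 1)) (truncExpPrev n x) x := by
  induction n with
  | zero =>
    have h : truncExpPrev 1 = fun _ => 1 := by funext; simp [truncExpPrev]
    simpa [h, truncExpPrev] using hasDerivAt_const x (1 : ℝ)
  | succ n ih =>
    have hterm : HasDerivAt (fun y : ℝ => y ^ (n + 1) / ((n + 1).factorial : ℝ))
        (x ^ n / n.factorial) x := by
      refine ((hasDerivAt_pow (n + 1) x).div_const _).congr_deriv ?_
      push_cast [Nat.factorial_succ]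
      field_simp
    have hsplit : truncExpPrev (n + 2) =
        truncExpPrev (n + 1) + fun y => y ^ (n + 1) / ((n + 1).factorial : ℝ) :=
      funext fun _ => Finset.sum_range_succ _ _
    rw [hsplit]
    exact (ih.add hterm).congr_deriv (Finset.sum_range_succ _ _).symm

noncomputable def expNegRemainder (n : ℕ) (x : ℝ) : ℝ := exp (-x) - truncExpPrev n (-x)

theorem expNegRemainder_zero (x : ℝ) : expNegRemainder 0 x = exp (-x) := by
  simp [expNegRemainder, truncExpPrev]

theorem expNegRemainder_succ_apply_zero (n : ℕ) : expNegRemainder (n + 1) 0 = 0 := by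
  simp [expNegRemainder, truncExpPrev, Finset.sum_range_succ']

theorem hasDerivAt_expNegRemainder_succ (n : ℕ) (x : ℝ) :
    HasDerivAt (expNegRemainder (n + 1)) (-expNegRemainder n x) x := by
  refine ((hasDerivAt_neg x).exp.sub
    ((hasDerivAt_truncExpPrev_succ n (-x)).comp x (hasDerivAt_neg x))).congr_deriv ?_
  simp only [expNegRemainder]
  ring

theorem continuous_expNegRemainder (n : ℕ) : Continuous (expNegRemainder n) := by
  cases n with
  | zero => simpa [funext expNegRemainder_zero] using (continuous_neg.rexp)
  | succ n => exact continuous_iff_continuousAt.2 fun x =>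
      (hasDerivAt_expNegRemainder_succ n x).continuousAt

theorem abs_expNegRemainder_le (n : ℕ) {x : ℝ} (hx : 0 ≤ x) :
    |expNegRemainder n x| ≤ x ^ n / n.factorial := by
  induction n generalizing x with
  | zero =>
    simpa [expNegRemainder_zero, abs_of_pos (exp_pos _)] using hx
  | succ n ih =>
    have hFTC : expNegRemainder (n + 1) x = -∫ t in (0 : ℝ)..x, expNegRemainder n t := by
      rw [← intervalIntegral.integral_neg, intervalIntegral.integral_eq_sub_of_hasDerivAt
        (fun t _ => hasDerivAt_expNegRemainder_succ n t)
        ((continuous_expNegRemainder n).neg.intervalIntegrable 0 x),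
        expNegRemainder_succ_apply_zero, sub_zero]
    calc |expNegRemainder (n + 1) x| ≤ ∫ t in (0 : ℝ)..x, |expNegRemainder n t| := by
          rw [hFTC, abs_neg]; exact intervalIntegral.abs_integral_le_integral_abs hx
      _ ≤ ∫ t in (0 : ℝ)..x, t ^ n / n.factorial :=
          intervalIntegral.integral_mono_on hx
            ((continuous_expNegRemainder n).abs.intervalIntegrable 0 x)
            (((continuous_pow n).div_const _).intervalIntegrable 0 x)
            fun t ht => ih ht.1
      _ = x ^ (n + 1) / (n + 1).factorial := by
          rw [intervalIntegral.integral_div, integral_pow]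
          push_cast [Nat.factorial_succ]
          field_simp
          simp

theorem expNegRemainder_mul_rpow (n : ℕ) (a : ℝ) {x : ℝ} (hx : 0 < x) :
    expNegRemainder n x * x ^ a =
      exp (-x) * x ^ a - ∑ k ∈ Finset.range n, (-1) ^ k / k.factorial * x ^ ((k : ℝ) + a) := by
  simp only [expNegRemainder, truncExpPrev, sub_mul, Finset.sum_mul, rpow_add hx, rpow_natCast,
    neg_pow x]
  congr 1
  exact Finset.sum_congr rfl fun k _ => by ring

theorem abs_expNegRemainder_mul_rpow_le (n : ℕ) (a : ℝ) {x : ℝ} (hx : 0 < x) :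
    |expNegRemainder n x * x ^ a| ≤ x ^ ((n : ℝ) + a) / n.factorial := by
  rw [abs_mul, abs_of_pos (rpow_pos_of_pos hx a), rpow_add hx, rpow_natCast, mul_div_right_comm]
  exact mul_le_mul_of_nonneg_right (abs_expNegRemainder_le n hx.le) (rpow_pos_of_pos hx a).le

theorem continuousOn_expNegRemainder_mul_rpow (n : ℕ) (a : ℝ) :
    ContinuousOn (fun x => expNegRemainder n x * x ^ a) (Ioi 0) :=
  (continuous_expNegRemainder n).continuousOn.mul
    (continuousOn_id.rpow_const fun _ hx => Or.inl (ne_of_gt hx))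

theorem integrableOn_expNegRemainder_mul_rpow {n : ℕ} {s : ℝ} (hn : (n : ℝ) < s)
    (hs : s < n + 1) :
    IntegrableOn (fun x => expNegRemainder n x * x ^ (-s)) (Ioi 0) := by
  rw [← Ioc_union_Ioi_eq_Ioi zero_le_one]
  refine IntegrableOn.union ?_ ?_
  · have hdom : IntegrableOn (fun x : ℝ => x ^ ((n : ℝ) + -s) / n.factorial) (Ioc 0 1) :=
      ((intervalIntegrable_iff_integrableOn_Ioc_of_le zero_le_one).1
        (intervalIntegral.intervalIntegrable_rpow' (by linarith))).div_const _
    refine hdom.mono' (((continuousOn_expNegRemainder_mul_rpow n (-s)).mono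
      Ioc_subset_Ioi_self).aestronglyMeasurable measurableSet_Ioc) ?_
    filter_upwards [ae_restrict_mem measurableSet_Ioc] with x hx
    exact abs_expNegRemainder_mul_rpow_le n (-s) hx.1
  · have hexp : IntegrableOn (fun x : ℝ => exp (-x) * x ^ (-s)) (Ioi 1) := by
      refine (integrableOn_exp_neg_Ioi 1).mono' ((continuous_neg.rexp.continuousOn.mul
        (continuousOn_id.rpow_const fun _ hx => Or.inl (ne_of_gt (zero_lt_one.trans hx))))
        |>.aestronglyMeasurable measurableSet_Ioi) ?_
      filter_upwards [ae_restrict_mem measurableSet_Ioi] with x (hx : 1 < x)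
      rw [norm_mul, norm_of_nonneg (exp_pos _).le, norm_of_nonneg (rpow_nonneg (by linarith) _)]
      exact mul_le_of_le_one_right (exp_pos _).le
        (rpow_le_one_of_one_le_of_nonpos hx.le (by linarith [n.cast_nonneg (α := ℝ)]))
    have hpow : IntegrableOn (fun x : ℝ => ∑ k ∈ Finset.range n,
        (-1) ^ k / k.factorial * x ^ ((k : ℝ) + -s)) (Ioi 1) := by
      refine integrable_finsetSum _ fun k hk => Integrable.const_mul ?_ _
      have hk : (k : ℝ) + 1 ≤ n := by exact_mod_cast Finset.mem_range.1 hk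
      exact integrableOn_Ioi_rpow_of_lt (by linarith) zero_lt_one
    refine (hexp.sub hpow).congr_fun (fun x hx => ?_) measurableSet_Ioi
    exact (expNegRemainder_mul_rpow n (-s) (zero_lt_one.trans hx)).symm

theorem tendsto_expNegRemainder_mul_rpow_nhdsGT_zero {n : ℕ} {a : ℝ} (ha : 0 < n + a) :
    Tendsto (fun x => expNegRemainder n x * x ^ a) (𝓝[>] 0) (𝓝 0) := by
  have hdom : Tendsto (fun x : ℝ => x ^ ((n : ℝ) + a) / n.factorial) (𝓝[>] 0) (𝓝 0) := by
    simpa [zero_rpow ha.ne'] using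
      ((continuousAt_rpow_const 0 _ (Or.inr ha.le)).tendsto.div_const (n.factorial : ℝ)).mono_left
        nhdsWithin_le_nhds
  refine squeeze_zero_norm' ?_ hdom
  filter_upwards [self_mem_nhdsWithin] with x hx
  exact abs_expNegRemainder_mul_rpow_le n a hx

theorem tendsto_expNegRemainder_mul_rpow_atTop {n : ℕ} {a : ℝ} (ha : n + a < 1) :
    Tendsto (fun x => expNegRemainder n x * x ^ a) atTop (𝓝 0) := by
  have hexp : Tendsto (fun x : ℝ => exp (-x) * x ^ a) atTop (𝓝 0) := by
    simpa [mul_comm] using tendsto_rpow_mul_exp_neg_mul_atTop_nhds_zero a 1 one_pos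
  have hpow : Tendsto (fun x : ℝ => ∑ k ∈ Finset.range n,
      (-1) ^ k / k.factorial * x ^ ((k : ℝ) + a)) atTop (𝓝 0) := by
    rw [← Finset.sum_const_zero (s := Finset.range n)]
    refine tendsto_finsetSum _ fun k hk => ?_
    have hk : (k : ℝ) + 1 ≤ n := by exact_mod_cast Finset.mem_range.1 hk
    simpa using (tendsto_rpow_neg_atTop (y := -(k + a)) (by linarith)).const_mul
      ((-1 : ℝ) ^ k / k.factorial)
  refine (sub_zero (0 : ℝ) ▸ hexp.sub hpow).congr' ?_
  filter_upwards [eventually_gt_atTop 0] with x hx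
  exact (expNegRemainder_mul_rpow n a hx).symm

theorem integral_expNegRemainder_succ_mul_rpow {n : ℕ} {s : ℝ} (hn : (n : ℝ) + 1 < s)
    (hs : s < n + 2) :
    ∫ x in Ioi 0, expNegRemainder (n + 1) x * x ^ (-s) =
      (∫ x in Ioi 0, expNegRemainder n x * x ^ (1 - s)) / (1 - s) := by
  have hs1 : 1 - s ≠ 0 := by linarith [n.cast_nonneg (α := ℝ)]
  have hv : ∀ x ∈ Ioi (0 : ℝ), HasDerivAt (fun y => y ^ (1 - s) / (1 - s)) (x ^ (-s)) x := by
    intro x hx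
    refine ((hasDerivAt_rpow_const (Or.inl (ne_of_gt hx))).div_const _).congr_deriv ?_
    rw [sub_sub_cancel_left, mul_div_cancel_left₀ _ hs1]
  have hint : IntegrableOn (fun x => expNegRemainder n x * x ^ (1 - s)) (Ioi 0) := by
    simpa only [neg_sub] using integrableOn_expNegRemainder_mul_rpow (s := s - 1)
      (by linarith) (by linarith)
  have hlim : ∀ l, Tendsto (fun x => expNegRemainder (n + 1) x * x ^ (1 - s)) l (𝓝 0) →
      Tendsto (expNegRemainder (n + 1) * fun y => y ^ (1 - s) / (1 - s)) l (𝓝 0) := by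
    intro l h
    simpa [Pi.mul_def, mul_div_assoc] using h.div_const (1 - s)
  rw [integral_Ioi_mul_deriv_eq_deriv_mul (fun x _ => hasDerivAt_expNegRemainder_succ n x) hv
    (integrableOn_expNegRemainder_mul_rpow (by push_cast; linarith) (by push_cast; linarith))
    (by simpa [IntegrableOn, Pi.mul_def, mul_div_assoc] using hint.div_const (1 - s))
    (hlim _ (tendsto_expNegRemainder_mul_rpow_nhdsGT_zero (by push_cast; linarith)))
    (hlim _ (tendsto_expNegRemainder_mul_rpow_atTop (by push_cast; linarith)))]
  simp only [neg_mul, integral_neg, mul_div_assoc', integral_div]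
  ring

theorem integral_expNegRemainder_mul_rpow (n : ℕ) {s : ℝ} (hn : (n : ℝ) < s) (hs : s < n + 1) :
    ∫ x in Ioi 0, expNegRemainder n x * x ^ (-s) = Gamma (1 - s) := by
  induction n generalizing s with
  | zero =>
    rw [Gamma_eq_integral (by simpa using hs), sub_sub_cancel_left]
    simp only [expNegRemainder_zero]
  | succ n ih =>
    push_cast at hn hs
    have hs1 : 1 - s ≠ 0 := by linarith [n.cast_nonneg (α := ℝ)]
    rw [integral_expNegRemainder_succ_mul_rpow hn (by linarith),
      show 1 - s = -(s - 1) by ring, ih (by linarith) (by linarith),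
      show 1 - (s - 1) = -(s - 1) + 1 by ring, Gamma_add_one (by simpa using hs1),
      mul_div_cancel_left₀ _ (by simpa using hs1)]

theorem one_div_Gamma_eq_sin_div_pi_mul_Gamma_one_sub {s : ℝ} (hs : sin (π * s) ≠ 0) :
    1 / Gamma s = sin (π * s) / π * Gamma (1 - s) := by
  have hrefl := Gamma_mul_Gamma_one_sub s
  have hΓ : Gamma s ≠ 0 := left_ne_zero_of_mul (hrefl ▸ div_ne_zero pi_ne_zero hs)
  rw [div_mul_eq_mul_div, eq_div_iff pi_ne_zero, ← mul_div_cancel_left₀ (Gamma (1 - s)) hΓ,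
    hrefl]
  field_simp

/-- Real reciprocal Gamma representation: for non-integer `z > 0` with `n = ⌊z⌋`,
`1/Γ(z) = (sin(πz)/π) ∫₀^∞ (e^{-x} - e_{n-1}(-x)) x^{-z} dx`, the integral converging. -/
theorem reciprocal_Gamma_real_integral_rep (z : ℝ) (hz : 0 < z) (hnint : ∀ m : ℤ, z ≠ (m : ℝ)) :
    IntegrableOn (fun x : ℝ => (Real.exp (-x) - truncExpPrev ⌊z⌋₊ (-x)) * x ^ (-z))
      (Set.Ioi 0) ∧
    1 / Real.Gamma z = (Real.sin (π * z) / π) *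
      ∫ x in Set.Ioi (0 : ℝ), (Real.exp (-x) - truncExpPrev ⌊z⌋₊ (-x)) * x ^ (-z) := by
  have hfloor : (⌊z⌋₊ : ℝ) < z :=
    (Nat.floor_le hz.le).lt_of_ne fun h => hnint ⌊z⌋₊ (by exact_mod_cast h.symm)
  have hsin : sin (π * z) ≠ 0 :=
    sin_ne_zero_iff.2 fun m h => hnint m (mul_left_cancel₀ pi_ne_zero (by linarith))
  refine ⟨integrableOn_expNegRemainder_mul_rpow hfloor (Nat.lt_floor_add_one z), ?_⟩
  change _ = _ * ∫ x in Ioi 0, expNegRemainder ⌊z⌋₊ x * x ^ (-z)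
  rw [integral_expNegRemainder_mul_rpow _ hfloor (Nat.lt_floor_add_one z)]
  exact one_div_Gamma_eq_sin_div_pi_mul_Gamma_one_sub hsin
end

section
/- For every real number z > 0 that is not an integer, with n = ⌊z⌋, one has 1/Γ(z) = (sin(πz)/(πz)) · ∫₀^∞ u^{1/z − 2} · ( e^{−u^{1/z}} − Σ_{k=0}^{n−1} (−1)^k u^{k/z}/k! ) du, where the integral is over (0, ∞). -/
/-!
Write `Rₘ(t) = e^{-t} - e_{m-1}(-t)` for the remainder of the Taylor expansion of `e^{-t}`.
Since `Rₘ(t) = O(t^m)` at `0` and `Rₘ(t) = O(t^{m-1})` at `∞`, Euler's integral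
`∫₀^∞ t^{x-1} Rₘ(t) dt` converges for `-m < x < 1 - m`, and there it equals `Γ(x)`
(Cauchy–Saalschütz): integrating by parts with `R'ₘ₊₁ = -Rₘ` gives
`x ∫ t^{x-1} Rₘ₊₁ = ∫ t^x Rₘ = Γ(x + 1)`, so the claim follows by induction on `m`.
For `n < z < n + 1` take `x = 1 - z`, `m = n`, substitute `t = u^{1/z}`, and finish with the
reflection formula `Γ(z) Γ(1 - z) = π / sin(πz)`.
-/

open MeasureTheory Real Filter Set Topology

noncomputable def expNegTaylorRemainder (m : ℕ) (t : ℝ) : ℝ :=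
  exp (-t) - ∑ k ∈ Finset.range m, (-1 : ℝ) ^ k * t ^ k / (k.factorial : ℝ)

namespace expNegTaylorRemainder

variable {m : ℕ} {s t : ℝ}

theorem continuous (m : ℕ) : Continuous (expNegTaylorRemainder m) := by
  unfold expNegTaylorRemainder; fun_prop

theorem succ (m : ℕ) (t : ℝ) :
    expNegTaylorRemainder (m + 1) t =
      expNegTaylorRemainder m t - (-1 : ℝ) ^ m * t ^ m / (m.factorial : ℝ) := by
  simp only [expNegTaylorRemainder, Finset.sum_range_succ]; ring

theorem succ_apply_zero (m : ℕ) : expNegTaylorRemainder (m + 1) 0 = 0 := by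
  induction m with
  | zero => simp [expNegTaylorRemainder]
  | succ m ih => rw [succ, ih]; simp

theorem hasDerivAt_succ (m : ℕ) (t : ℝ) :
    HasDerivAt (expNegTaylorRemainder (m + 1)) (-expNegTaylorRemainder m t) t := by
  induction m with
  | zero =>
    simpa [funext (succ 0), expNegTaylorRemainder] using (hasDerivAt_neg t).exp.sub_const 1
  | succ m ih =>
    rw [funext (succ (m + 1))]
    have hmon : HasDerivAt
        (fun s : ℝ => (-1 : ℝ) ^ (m + 1) * s ^ (m + 1) / ((m + 1).factorial : ℝ))
        (-((-1 : ℝ) ^ m * t ^ m / (m.factorial : ℝ))) t := by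
      refine (((hasDerivAt_pow (m + 1) t).const_mul ((-1 : ℝ) ^ (m + 1))).div_const
        ((m + 1).factorial : ℝ)).congr_deriv ?_
      push_cast [Nat.factorial_succ, pow_succ]
      field_simp
    refine (ih.sub hmon).congr_deriv ?_
    rw [succ]; ring

theorem abs_le (ht : 0 ≤ t) :
    |expNegTaylorRemainder m t| ≤ t ^ m / (m.factorial : ℝ) := by
  induction m generalizing t with
  | zero => simpa [expNegTaylorRemainder, abs_of_pos (exp_pos _)] using ht
  | succ m ih =>
    have hFTC :
        ∫ s in (0 : ℝ)..t, -expNegTaylorRemainder m s = expNegTaylorRemainder (m + 1) t := by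
      rw [intervalIntegral.integral_eq_sub_of_hasDerivAt (fun s _ => hasDerivAt_succ m s)
        ((continuous m).neg.intervalIntegrable 0 t), succ_apply_zero, sub_zero]
    have hmon : ∫ s in (0 : ℝ)..t, s ^ m / (m.factorial : ℝ) =
        t ^ (m + 1) / ((m + 1).factorial : ℝ) := by
      rw [intervalIntegral.integral_div, integral_pow]
      push_cast [Nat.factorial_succ]
      field_simp
      simp
    rw [← hFTC, ← norm_eq_abs, ← abs_of_nonneg (by positivity : 0 ≤ t ^ (m + 1) / _),
      ← hmon]
    refine intervalIntegral.norm_integral_le_abs_of_norm_le ?_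
      (((continuous_pow m).div_const _).intervalIntegrable 0 t)
    filter_upwards [ae_restrict_mem measurableSet_uIoc] with s hs
    rw [uIoc_of_le ht] at hs
    simpa using ih hs.1.le

theorem continuousOn_rpow_mul (m : ℕ) (s : ℝ) :
    ContinuousOn (fun t => t ^ s * expNegTaylorRemainder m t) (Ioi 0) :=
  (continuousOn_id.rpow_const fun _ ht => Or.inl (ne_of_gt ht)).mul (continuous m).continuousOn

theorem abs_rpow_mul_le (ht : 0 < t) :
    |t ^ s * expNegTaylorRemainder m t| ≤ t ^ (s + m) / (m.factorial : ℝ) := by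
  rw [abs_mul, abs_of_pos (rpow_pos_of_pos ht s), rpow_add ht, rpow_natCast, mul_div_assoc]
  exact mul_le_mul_of_nonneg_left (abs_le ht.le) (rpow_nonneg ht.le s)

theorem rpow_mul_eq_sub_sum (ht : 0 < t) :
    t ^ s * expNegTaylorRemainder m t =
      t ^ s * exp (-t) -
        ∑ k ∈ Finset.range m, (-1 : ℝ) ^ k / (k.factorial : ℝ) * t ^ (s + k) := by
  simp only [expNegTaylorRemainder, mul_sub, Finset.mul_sum, rpow_add ht, rpow_natCast]
  congr 1
  exact Finset.sum_congr rfl fun k _ => by ring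

theorem tendsto_rpow_mul_nhdsGT_zero (h : 0 < s + m) :
    Tendsto (fun t => t ^ s * expNegTaylorRemainder m t) (𝓝[>] 0) (𝓝 0) := by
  have hbound :
      Tendsto (fun t : ℝ => t ^ (s + m) / (m.factorial : ℝ)) (𝓝[>] 0) (𝓝 0) := by
    simpa [zero_rpow h.ne'] using
      ((continuousAt_rpow_const 0 (s + m) (Or.inr h.le)).tendsto.div_const _).mono_left
        nhdsWithin_le_nhds
  refine squeeze_zero_norm' ?_ hbound
  filter_upwards [self_mem_nhdsWithin] with t ht
  exact abs_rpow_mul_le ht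

theorem tendsto_rpow_mul_atTop (h : s + m < 1) :
    Tendsto (fun t => t ^ s * expNegTaylorRemainder m t) atTop (𝓝 0) := by
  have hpoly : Tendsto (fun t : ℝ => ∑ k ∈ Finset.range m,
      (-1 : ℝ) ^ k / (k.factorial : ℝ) * t ^ (s + k)) atTop (𝓝 0) := by
    rw [← Finset.sum_const_zero (s := Finset.range m)]
    refine tendsto_finsetSum _ fun k hk => ?_
    have hk : (k : ℝ) + 1 ≤ m := by exact_mod_cast Finset.mem_range.mp hk
    simpa using (tendsto_rpow_neg_atTop (by linarith : 0 < -(s + k))).const_mul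
      ((-1 : ℝ) ^ k / (k.factorial : ℝ))
  have hexp : Tendsto (fun t : ℝ => t ^ s * exp (-t)) atTop (𝓝 0) := by
    simpa using tendsto_rpow_mul_exp_neg_mul_atTop_nhds_zero s 1 one_pos
  have := hexp.sub hpoly
  rw [sub_zero] at this
  refine this.congr' ?_
  filter_upwards [eventually_gt_atTop 0] with t ht
  exact (rpow_mul_eq_sub_sum ht).symm

theorem integrableOn_Ioc_rpow_mul (h : -1 < s + m) :
    IntegrableOn (fun t => t ^ s * expNegTaylorRemainder m t) (Ioc 0 1) := by
  have hbound : IntegrableOn (fun t : ℝ => t ^ (s + m) / (m.factorial : ℝ)) (Ioc 0 1) :=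
    ((intervalIntegrable_iff_integrableOn_Ioc_of_le zero_le_one).mp
      (intervalIntegral.intervalIntegrable_rpow' h)).div_const _
  refine hbound.mono' (((continuousOn_rpow_mul m s).mono Ioc_subset_Ioi_self).aestronglyMeasurable
    measurableSet_Ioc) ?_
  filter_upwards [ae_restrict_mem measurableSet_Ioc] with t ht
  exact abs_rpow_mul_le ht.1

theorem integrableOn_Ioi_one_rpow_mul (h : s + m < 0) :
    IntegrableOn (fun t => t ^ s * expNegTaylorRemainder m t) (Ioi 1) := by
  have hexp : IntegrableOn (fun t : ℝ => t ^ s * exp (-t)) (Ioi 1) := by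
    simp_rw [mul_comm _ (exp _)]
    exact integrable_of_isBigO_exp_neg one_half_pos
      (continuousOn_id.neg.rexp.mul (continuousOn_id.rpow_const fun t ht =>
        Or.inl (zero_lt_one.trans_le ht).ne'))
      (Gamma_integrand_isLittleO s).isBigO
  have hpoly : IntegrableOn (fun t : ℝ => ∑ k ∈ Finset.range m,
      (-1 : ℝ) ^ k / (k.factorial : ℝ) * t ^ (s + k)) (Ioi 1) := by
    refine integrable_finsetSum _ fun k hk => Integrable.const_mul ?_ _
    have hk : (k : ℝ) + 1 ≤ m := by exact_mod_cast Finset.mem_range.mp hk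
    exact integrableOn_Ioi_rpow_of_lt (by linarith) one_pos
  exact (hexp.sub hpoly).congr_fun
    (fun t ht => (rpow_mul_eq_sub_sum (zero_lt_one.trans ht)).symm) measurableSet_Ioi

theorem integrableOn_rpow_mul (h₁ : -1 < s + m) (h₂ : s + m < 0) :
    IntegrableOn (fun t => t ^ s * expNegTaylorRemainder m t) (Ioi 0) := by
  rw [← Ioc_union_Ioi_eq_Ioi zero_le_one]
  exact (integrableOn_Ioc_rpow_mul h₁).union (integrableOn_Ioi_one_rpow_mul h₂)

end expNegTaylorRemainder

theorem Gamma_eq_integral_rpow_mul_expNegTaylorRemainder (m : ℕ) {x : ℝ}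
    (h₁ : -(m : ℝ) < x) (h₂ : x < 1 - m) :
    Gamma x = ∫ t in Ioi 0, t ^ (x - 1) * expNegTaylorRemainder m t := by
  induction m generalizing x with
  | zero =>
    rw [Gamma_eq_integral (by simpa using h₁)]
    simp [expNegTaylorRemainder, mul_comm]
  | succ m ih =>
    push_cast at h₁ h₂
    have hx : x ≠ 0 := by linarith [(m.cast_nonneg : (0 : ℝ) ≤ m)]
    have hint : IntegrableOn (fun t => t ^ x * -expNegTaylorRemainder m t) (Ioi 0) := by
      simp only [mul_neg]
      exact Integrable.fun_neg (expNegTaylorRemainder.integrableOn_rpow_mul (s := x) (m := m)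
        (by linarith) (by linarith))
    have hint' : IntegrableOn (fun t => x * t ^ (x - 1) * expNegTaylorRemainder (m + 1) t)
        (Ioi 0) := by
      simp only [mul_assoc]
      exact (expNegTaylorRemainder.integrableOn_rpow_mul (s := x - 1) (m := m + 1)
        (by push_cast; linarith) (by push_cast; linarith)).const_mul x
    have hparts := integral_Ioi_mul_deriv_eq_deriv_mul
      (fun t ht => hasDerivAt_rpow_const (Or.inl (ne_of_gt ht)))
      (fun t _ => expNegTaylorRemainder.hasDerivAt_succ m t) hint hint'
      (expNegTaylorRemainder.tendsto_rpow_mul_nhdsGT_zero (by push_cast; linarith))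
      (expNegTaylorRemainder.tendsto_rpow_mul_atTop (by push_cast; linarith))
    have hIH : Gamma (x + 1) = ∫ t in Ioi 0, t ^ x * expNegTaylorRemainder m t := by
      simpa using ih (x := x + 1) (by linarith) (by linarith)
    simp only [mul_neg, integral_neg, mul_assoc, integral_const_mul, sub_zero, zero_sub, ← hIH,
      Gamma_add_one hx, neg_inj] at hparts
    exact mul_left_cancel₀ hx hparts

theorem expNegTaylorRemainder_rpow_one_div (m : ℕ) {u : ℝ} (hu : 0 ≤ u) (z : ℝ) :
    expNegTaylorRemainder m (u ^ (1 / z)) = exp (-(u ^ (1 / z))) -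
      ∑ k ∈ Finset.range m, (-1 : ℝ) ^ k * u ^ ((k : ℝ) / z) / (k.factorial : ℝ) := by
  simp only [expNegTaylorRemainder, ← rpow_natCast, ← rpow_mul hu, one_div_mul_eq_div]

theorem integral_rpow_mul_comp_rpow_one_div {z : ℝ} (hz : z ≠ 0) (g : ℝ → ℝ) :
    ∫ u in Ioi 0, u ^ (1 / z - 2) * g (u ^ (1 / z)) = |z| * ∫ t in Ioi 0, t ^ (-z) * g t := by
  rw [← integral_const_mul,
    ← integral_comp_rpow_Ioi (fun t => |z| * (t ^ (-z) * g t)) (one_div_ne_zero hz)]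
  refine setIntegral_congr_fun measurableSet_Ioi fun u (hu : 0 < u) => ?_
  have hpow : u ^ (1 / z - 2) = u ^ (1 / z - 1) * (u ^ (1 / z)) ^ (-z) := by
    rw [← rpow_mul hu.le, ← rpow_add hu]
    congr 1
    field_simp
    ring
  rw [smul_eq_mul, hpow, abs_one_div]
  field_simp [abs_ne_zero.mpr hz]

theorem one_div_Gamma_eq_sin_mul_Gamma_one_sub {z : ℝ} (h : sin (π * z) ≠ 0) :
    1 / Gamma z = sin (π * z) / π * Gamma (1 - z) := by
  have hrefl := Gamma_mul_Gamma_one_sub z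
  have hGamma : Gamma z ≠ 0 := fun h0 => by
    rw [h0, zero_mul, eq_comm, div_eq_zero_iff] at hrefl
    exact hrefl.elim pi_ne_zero h
  rw [eq_div_iff h] at hrefl
  field_simp
  linear_combination -hrefl

/-- For non-integer `z > 0` with `n = ⌊z⌋`,
`1/Γ(z) = (sin(πz)/(πz)) ∫₀^∞ u^{1/z - 2} (e^{-u^{1/z}} - ∑_{k=0}^{n-1} (-1)^k u^{k/z}/k!) du`. -/
theorem reciprocal_Gamma_substituted_rep (z : ℝ) (hz : 0 < z)
    (hnint : ∀ m : ℤ, z ≠ (m : ℝ)) :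
    1 / Real.Gamma z = (Real.sin (π * z) / (π * z)) *
      ∫ u in Set.Ioi (0 : ℝ), u ^ (1 / z - 2) *
        (Real.exp (-(u ^ (1 / z))) -
          ∑ k ∈ Finset.range ⌊z⌋₊, (-1 : ℝ) ^ k * u ^ ((k : ℝ) / z) / (k.factorial : ℝ)) := by
  set n := ⌊z⌋₊
  have hn₁ : (n : ℝ) < z := (Nat.floor_le hz.le).lt_of_ne (hnint n).symm
  have hn₂ : z < n + 1 := Nat.lt_floor_add_one z
  have hsin : sin (π * z) ≠ 0 := fun h => by
    obtain ⟨k, hk⟩ := sin_eq_zero_iff.mp h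
    exact hnint k (mul_left_cancel₀ pi_ne_zero (by linarith))
  have hGamma := Gamma_eq_integral_rpow_mul_expNegTaylorRemainder n (x := 1 - z)
    (by linarith) (by linarith)
  rw [sub_sub_cancel_left] at hGamma
  rw [← setIntegral_congr_fun measurableSet_Ioi fun u (hu : 0 < u) =>
      congrArg (u ^ (1 / z - 2) * ·) (expNegTaylorRemainder_rpow_one_div n hu.le z),
    integral_rpow_mul_comp_rpow_one_div hz.ne', ← hGamma, abs_of_pos hz,
    one_div_Gamma_eq_sin_mul_Gamma_one_sub hsin]
  field_simp
end

section
/- For every real number z > 0 that is not an integer, with n = ⌊z⌋, the function x ↦ (e^{−x} − e_{n−1}(−x)) · x^{−z} is Lebesgue integrable on the interval (0, ∞). -/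
open MeasureTheory Real Filter Set

/-!
Near `0` the remainder `e^{-x} - e_{n-1}(-x)` is `O(x^n)`, so the integrand is `O(x^{n-z})` with
`n - z > -1`. On `(1, ∞)` the integrand splits into `e^{-x} x^{-z}`, which decays exponentially,
and the monomials `x^{k-z}` for `k < n`; these are integrable at infinity because `z` is not an
integer, hence `k + 1 ≤ n < z`.
-/

theorem abs_exp_sub_truncExpPrev_le (n : ℕ) (x : ℝ) :
    |exp x - truncExpPrev n x| ≤ |x| ^ n * exp |x| := by
  have h := Complex.norm_exp_sub_sum_le_norm_mul_exp (x : ℂ) n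
  rw [Complex.norm_real, Real.norm_eq_abs] at h
  rw [truncExpPrev]
  exact_mod_cast h

theorem integrableOn_Ioc_exp_neg_sub_truncExpPrev_mul_rpow {n : ℕ} {s : ℝ} (hs : s < n + 1) :
    IntegrableOn (fun x => (exp (-x) - truncExpPrev n (-x)) * x ^ (-s)) (Ioc 0 1) := by
  have hdom : IntegrableOn (fun x : ℝ => exp 1 * x ^ ((n : ℝ) - s)) (Ioc 0 1) := by
    have hrpow := intervalIntegral.intervalIntegrable_rpow' (a := 0) (b := 1) (r := n - s)
      (by linarith)
    rw [intervalIntegrable_iff, uIoc_of_le zero_le_one] at hrpow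
    exact hrpow.const_mul _
  refine hdom.mono' ?_ ((ae_restrict_iff' measurableSet_Ioc).2 (ae_of_all _ ?_))
  · refine ContinuousOn.aestronglyMeasurable ?_ measurableSet_Ioc
    have htrunc : ContinuousOn (fun x : ℝ => truncExpPrev n (-x)) (Ioc 0 1) := by
      unfold truncExpPrev; fun_prop
    exact (continuousOn_id.neg.rexp.sub htrunc).mul
      (continuousOn_id.rpow_const fun x hx => Or.inl hx.1.ne')
  · rintro x ⟨hx0, hx1⟩
    rw [norm_mul, norm_of_nonneg (rpow_nonneg hx0.le _), Real.norm_eq_abs,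
      rpow_sub hx0, rpow_natCast, div_eq_mul_inv, ← rpow_neg hx0.le]
    have hbound := abs_exp_sub_truncExpPrev_le n (-x)
    rw [abs_neg, abs_of_pos hx0] at hbound
    calc |exp (-x) - truncExpPrev n (-x)| * x ^ (-s)
        ≤ x ^ n * exp x * x ^ (-s) := by gcongr
      _ ≤ exp 1 * (x ^ n * x ^ (-s)) := by
        rw [mul_comm (x ^ n), mul_assoc]; gcongr

theorem integrableOn_Ioi_exp_neg_mul_rpow (s : ℝ) {a : ℝ} (ha : 0 < a) :
    IntegrableOn (fun x => exp (-x) * x ^ s) (Ioi a) :=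
  integrable_of_isBigO_exp_neg one_half_pos
    (continuousOn_id.neg.rexp.mul (continuousOn_id.rpow_const fun _ hx =>
      Or.inl (ha.trans_le hx).ne'))
    (Gamma_integrand_isLittleO s).isBigO

theorem integrableOn_Ioi_pow_mul_rpow {k : ℕ} {s a : ℝ} (ha : 0 < a) (hs : (k : ℝ) + 1 < s) :
    IntegrableOn (fun x => x ^ k * x ^ (-s)) (Ioi a) := by
  refine (integrableOn_Ioi_rpow_of_lt (by linarith : (k : ℝ) - s < -1) ha).congr_fun
    (fun x hx => ?_) measurableSet_Ioi
  beta_reduce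
  rw [sub_eq_add_neg, rpow_add (ha.trans hx), rpow_natCast]

theorem integrableOn_Ioi_truncExpPrev_neg_mul_rpow {n : ℕ} {s a : ℝ} (ha : 0 < a)
    (hs : ∀ k < n, (k : ℝ) + 1 < s) :
    IntegrableOn (fun x => truncExpPrev n (-x) * x ^ (-s)) (Ioi a) := by
  simp_rw [truncExpPrev, Finset.sum_mul]
  refine integrable_finsetSum _ fun k hk => ?_
  have hterm : IntegrableOn _ (Ioi a) :=
    (integrableOn_Ioi_pow_mul_rpow ha (hs k (Finset.mem_range.1 hk))).const_mul
      ((-1) ^ k / k.factorial : ℝ)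
  refine hterm.congr_fun (fun x _ => ?_) measurableSet_Ioi
  rw [neg_pow]
  ring

theorem regularized_integrand_integrableOn_general (z : ℝ)
    (hnint : ∀ m : ℤ, z ≠ (m : ℝ)) :
    IntegrableOn (fun x : ℝ => (Real.exp (-x) - truncExpPrev ⌊z⌋₊ (-x)) * x ^ (-z))
      (Set.Ioi 0) := by
  have hz_lt : z < ⌊z⌋₊ + 1 := Nat.lt_floor_add_one z
  have hz_gt : ∀ k < ⌊z⌋₊, (k : ℝ) + 1 < z := fun k hk => by
    have hle : ((k + 1 : ℕ) : ℝ) ≤ z := (Nat.le_floor_iff' k.succ_ne_zero).1 hk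
    exact_mod_cast hle.lt_of_ne (by exact_mod_cast (hnint (k + 1)).symm)
  rw [← Ioc_union_Ioi_eq_Ioi zero_le_one]
  refine (integrableOn_Ioc_exp_neg_sub_truncExpPrev_mul_rpow hz_lt).union ?_
  simp_rw [sub_mul]
  exact (integrableOn_Ioi_exp_neg_mul_rpow _ one_pos).sub
    (integrableOn_Ioi_truncExpPrev_neg_mul_rpow one_pos hz_gt)

/-- For non-integer `z > 0` with `n = ⌊z⌋`, the function
`x ↦ (e^{-x} - e_{n-1}(-x)) x^{-z}` is Lebesgue integrable on `(0, ∞)`. -/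
theorem regularized_integrand_integrableOn (z : ℝ) (hz : 0 < z)
    (hnint : ∀ m : ℤ, z ≠ (m : ℝ)) :
    IntegrableOn (fun x : ℝ => (Real.exp (-x) - truncExpPrev ⌊z⌋₊ (-x)) * x ^ (-z))
      (Set.Ioi 0) :=
  regularized_integrand_integrableOn_general z hnint
end
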